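/- For a bounded continuous function σ : ℂ → ℝ define the conformal distance d_σ(x,y) = inf over all continuously differentiable paths α : [0,1] → ℂ with α(0) = x and α(1) = y of ∫₀¹ exp(σ(α(t))/2) |α'(t)| dt. Let σ, τ : ℂ → ℝ be bounded continuous functions and let x ∈ ℂ. Then lim_{y → x, y ≠ x} d_{τ+σ}(x,y) / d_τ(x,y) = exp(σ(x)/2). -/

import Mathlib

open Real Filter Topology

/-- The Riemannian distance of the conformal metric `e^{σ(z)}|dz|²` on the plane:
the infimum of `∫₀¹ e^{σ(α(t))/2} |α'(t)| dt` over `C¹` paths from `x` to `y`. -/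
noncomputable def confDist (σ : ℂ → ℝ) (x y : ℂ) : ℝ :=
  sInf { L : ℝ | ∃ α : ℝ → ℂ, ContDiff ℝ 1 α ∧ α 0 = x ∧ α 1 = y ∧
    L = ∫ t in (0 : ℝ)..1, Real.exp (σ (α t) / 2) * ‖deriv α t‖ }

/-!
Near `x` a continuous conformal factor is almost constant, so `d_σ(x, y) ~ e^{σ(x)/2} |y - x|`
as `y → x`: the straight segment gives the upper bound, and a path from `x` to `y` either
stays in a small ball around `x`, where `σ ≥ σ(x) - ε`, or leaves it, which costs at least
`e^{(inf σ)/2}` times the radius. Dividing these asymptotics for `τ + σ` and `τ` gives the limit.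
-/

section

open AffineMap (lineMap contDiff_lineMap)

noncomputable def confLength (σ : ℂ → ℝ) (α : ℝ → ℂ) : ℝ :=
  ∫ t in (0 : ℝ)..1, exp (σ (α t) / 2) * ‖deriv α t‖

variable {σ : ℂ → ℝ} {x y : ℂ}

theorem confDist_le_length {α : ℝ → ℂ} (hα : ContDiff ℝ 1 α) :
    confDist σ (α 0) (α 1) ≤ confLength σ α := by
  refine csInf_le ⟨0, ?_⟩ ⟨α, hα, rfl, rfl, rfl⟩
  rintro L ⟨β, -, -, -, rfl⟩
  exact intervalIntegral.integral_nonneg zero_le_one fun t _ => by positivity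

theorem le_confDist {L : ℝ}
    (h : ∀ α : ℝ → ℂ, ContDiff ℝ 1 α → α 0 = x → α 1 = y → L ≤ confLength σ α) :
    L ≤ confDist σ x y := by
  refine le_csInf ⟨_, lineMap x y, contDiff_lineMap x y, by simp, by simp, rfl⟩ ?_
  rintro _ ⟨α, hα, h0, h1, rfl⟩
  exact h α hα h0 h1

theorem confLength_lineMap :
    confLength σ (lineMap x y) = (∫ t in (0 : ℝ)..1, exp (σ (lineMap x y t) / 2)) * dist y x := by
  simp only [confLength, AffineMap.hasDerivAt_lineMap.deriv, dist_eq_norm,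
    intervalIntegral.integral_mul_const]

theorem confDist_le_mul_dist (hσ : Continuous σ) {C : ℝ} (hC : ∀ z ∈ segment ℝ x y, σ z ≤ C) :
    confDist σ x y ≤ exp (C / 2) * dist y x := by
  have hexp : (∫ t in (0 : ℝ)..1, exp (σ (lineMap x y t) / 2)) ≤ exp (C / 2) := by
    calc (∫ t in (0 : ℝ)..1, exp (σ (lineMap x y t) / 2))
        ≤ ∫ _ in (0 : ℝ)..1, exp (C / 2) := by
          refine intervalIntegral.integral_mono_on zero_le_one
            (Continuous.intervalIntegrable (by fun_prop) _ _) intervalIntegrable_const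
            fun t ht => exp_le_exp.2 ?_
          linarith [hC _ (segment_eq_image_lineMap ℝ x y ▸ Set.mem_image_of_mem _ ht)]
      _ = exp (C / 2) := by simp
  calc confDist σ x y ≤ confLength σ (lineMap x y) := by
        simpa using confDist_le_length (σ := σ) (contDiff_lineMap x y)
    _ ≤ exp (C / 2) * dist y x := by
        rw [confLength_lineMap]; gcongr

theorem dist_le_integral_norm_deriv {α : ℝ → ℂ} (hα : ContDiff ℝ 1 α) {s : ℝ} (hs : 0 ≤ s) :
    dist (α s) (α 0) ≤ ∫ t in (0 : ℝ)..s, ‖deriv α t‖ := by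
  rw [dist_eq_norm, ← intervalIntegral.integral_eq_sub_of_hasDerivAt
    (fun t _ => ((hα.differentiable one_ne_zero) t).hasDerivAt)
    (hα.continuous_deriv_one.intervalIntegrable _ _)]
  exact intervalIntegral.norm_integral_le_integral_norm hs

theorem exp_mul_dist_le_confLength (hσ : Continuous σ) {α : ℝ → ℂ} (hα : ContDiff ℝ 1 α)
    {s b : ℝ} (hs : s ∈ Set.Icc (0 : ℝ) 1) (hb : ∀ t ∈ Set.Icc 0 s, b ≤ σ (α t)) :
    exp (b / 2) * dist (α s) (α 0) ≤ confLength σ α := by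
  have hα_cont : Continuous α := hα.continuous
  have hα'_cont : Continuous (deriv α) := hα.continuous_deriv_one
  calc exp (b / 2) * dist (α s) (α 0)
      ≤ exp (b / 2) * ∫ t in (0 : ℝ)..s, ‖deriv α t‖ := by
        gcongr; exact dist_le_integral_norm_deriv hα hs.1
    _ ≤ ∫ t in (0 : ℝ)..s, exp (σ (α t) / 2) * ‖deriv α t‖ := by
        rw [← intervalIntegral.integral_const_mul]
        refine intervalIntegral.integral_mono_on hs.1
          (Continuous.intervalIntegrable (by fun_prop) _ _) (Continuous.intervalIntegrable (by fun_prop) _ _) fun t ht => ?_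
        gcongr
        exact hb t ht
    _ ≤ confLength σ α :=
        intervalIntegral.integral_mono_interval le_rfl hs.1 hs.2
          (Eventually.of_forall fun t => by positivity)
          (Continuous.intervalIntegrable (by fun_prop) _ _)

theorem min_le_confDist (hσ : Continuous σ) {m c r : ℝ} (hm : ∀ z, m ≤ σ z)
    (hc : ∀ z ∈ Metric.ball x r, c ≤ σ z) :
    min (exp (c / 2) * dist y x) (exp (m / 2) * r) ≤ confDist σ x y := by
  refine le_confDist fun α hα h0 h1 => ?_
  by_cases hin : ∀ t ∈ Set.Icc (0 : ℝ) 1, α t ∈ Metric.ball x r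
  · have := exp_mul_dist_le_confLength hσ hα (s := 1) (by simp) fun t ht => hc _ (hin t ht)
    rw [h0, h1] at this
    exact (min_le_left _ _).trans this
  · push Not at hin
    obtain ⟨s, hs, hout⟩ := hin
    have := exp_mul_dist_le_confLength hσ hα hs fun t _ => hm (α t)
    rw [h0] at this
    refine (min_le_right _ _).trans (le_trans ?_ this)
    gcongr
    simpa using hout

theorem eventually_confDist_le (hσ : Continuous σ) {C : ℝ} (hC : σ x < C) :
    ∀ᶠ y in 𝓝 x, confDist σ x y ≤ exp (C / 2) * dist y x := by
  obtain ⟨r, hr, hball⟩ := Metric.eventually_nhds_iff_ball.1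
    (hσ.continuousAt.eventually (gt_mem_nhds hC))
  filter_upwards [Metric.ball_mem_nhds x hr] with y hy
  refine confDist_le_mul_dist hσ fun z hz => (hball z ?_).le
  exact (convex_ball x r).segment_subset (Metric.mem_ball_self hr) hy hz

theorem eventually_le_confDist (hσ : Continuous σ) {m : ℝ} (hm : ∀ z, m ≤ σ z) {c : ℝ}
    (hc : c < σ x) :
    ∀ᶠ y in 𝓝 x, exp (c / 2) * dist y x ≤ confDist σ x y := by
  obtain ⟨r, hr, hball⟩ := Metric.eventually_nhds_iff_ball.1
    (hσ.continuousAt.eventually (lt_mem_nhds hc))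
  filter_upwards [Metric.ball_mem_nhds x (by positivity : 0 < exp (m / 2) * r / exp (c / 2))]
    with y hy
  have hy : exp (c / 2) * dist y x ≤ exp (m / 2) * r := by
    rw [Metric.mem_ball, lt_div_iff₀ (exp_pos _)] at hy
    linarith
  simpa only [min_eq_left hy] using min_le_confDist (y := y) hσ hm fun z hz => (hball z hz).le

theorem tendsto_confDist_div_dist (hσ : Continuous σ) {m : ℝ} (hm : ∀ z, m ≤ σ z) (x : ℂ) :
    Tendsto (fun y => confDist σ x y / dist y x) (𝓝[≠] x) (𝓝 (exp (σ x / 2))) := by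
  have hexp : Tendsto (fun c => exp (c / 2)) (𝓝 (σ x)) (𝓝 (exp (σ x / 2))) :=
    (by fun_prop : Continuous fun c : ℝ => exp (c / 2)).tendsto _
  refine tendsto_order.2 ⟨fun a ha => ?_, fun a ha => ?_⟩
  · obtain ⟨c, hca, hcx⟩ := ((hexp.mono_left nhdsWithin_le_nhds).eventually
      (lt_mem_nhds ha)).and (self_mem_nhdsWithin (s := Set.Iio (σ x))) |>.exists
    filter_upwards [nhdsWithin_le_nhds (eventually_le_confDist hσ hm hcx),
      self_mem_nhdsWithin] with y hy hyx
    rw [lt_div_iff₀ (dist_pos.2 hyx)]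
    exact (mul_lt_mul_of_pos_right hca (dist_pos.2 hyx)).trans_le hy
  · obtain ⟨C, hCa, hCx⟩ := ((hexp.mono_left nhdsWithin_le_nhds).eventually
      (gt_mem_nhds ha)).and (self_mem_nhdsWithin (s := Set.Ioi (σ x))) |>.exists
    filter_upwards [nhdsWithin_le_nhds (eventually_confDist_le hσ hCx),
      self_mem_nhdsWithin] with y hy hyx
    rw [div_lt_iff₀ (dist_pos.2 hyx)]
    exact hy.trans_lt (mul_lt_mul_of_pos_right hCa (dist_pos.2 hyx))

end

/-- Comparison of conformally equivalent distances: if `γ' = e^σ γ` (with `γ = e^τ |dz|²`),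
then `d_{γ'}(x,y)/d_γ(x,y) → e^{σ(x)/2}` as `y → x`. -/
theorem confDist_ratio_limit
    (σ τ : ℂ → ℝ) (hσc : Continuous σ) (hτc : Continuous τ)
    (hσb : ∃ M : ℝ, ∀ z, |σ z| ≤ M) (hτb : ∃ M : ℝ, ∀ z, |τ z| ≤ M)
    (x : ℂ) :
    Tendsto (fun y => confDist (fun z => τ z + σ z) x y / confDist τ x y)
      (𝓝[≠] x) (𝓝 (Real.exp (σ x / 2))) := by
  obtain ⟨Mσ, hMσ⟩ := hσb
  obtain ⟨Mτ, hMτ⟩ := hτb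
  have hτ := tendsto_confDist_div_dist hτc (fun z => neg_le_of_abs_le (hMτ z)) x
  have hτσ := tendsto_confDist_div_dist (hτc.add hσc)
    (fun z => add_le_add (neg_le_of_abs_le (hMτ z)) (neg_le_of_abs_le (hMσ z))) x
  rw [← add_sub_cancel_left (τ x) (σ x), sub_div, exp_sub]
  refine (hτσ.div hτ (exp_pos _).ne').congr' ?_
  filter_upwards [self_mem_nhdsWithin] with y hy
  exact div_div_div_cancel_right₀ (dist_pos.2 hy).ne' _ _
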